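/- Let n ≥ 2, let V₁ and V₂ be complementary complex linear subspaces of ℂⁿ, and write each z ∈ ℂⁿ uniquely as z = z' + z'' with z' ∈ V₁, z'' ∈ V₂. Let V ⊆ ℂⁿ be an unbounded subset having a unique tangent cone at infinity C_∞(V). Suppose there are real numbers A > 0 and B ≥ 1 such that every v ∈ C_∞(V) satisfies the strict inequality ‖v''‖ < A(1 + ‖v'‖)^B. Then there exists a positive real number R such that every w ∈ V satisfies ‖w''‖ < R(1 + ‖w'‖)^B. -/

import Mathlib

/-- The tangent cone at infinity of `V ⊆ ℂⁿ` with respect to a sequence `t` of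
(positive) real numbers tending to `∞`: the set of `v` for which there is a sequence
`x j ∈ V` with `x j / t j → v`. -/
def tangentConeAtInftyWrt (n : ℕ) (V : Set (EuclideanSpace ℂ (Fin n))) (t : ℕ → ℝ) :
    Set (EuclideanSpace ℂ (Fin n)) :=
  {v | ∃ x : ℕ → EuclideanSpace ℂ (Fin n), (∀ j, x j ∈ V) ∧
    Filter.Tendsto (fun j => (t j)⁻¹ • x j) Filter.atTop (nhds v)}

/-!
Otherwise there are `w_j ∈ V` with `(j + 1) (1 + ‖w_j'‖)^B ≤ ‖w_j''‖`. Dividing by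
`t_j = ‖w_j''‖ ≥ j + 1` gives points `u_j` with `‖u_j''‖ = 1` and, since `B ≥ 1`,
`‖u_j'‖ ≤ 1 / (j + 1)`; they are bounded, so a subsequence converges to some `v` with `v' = 0`
and `‖v‖ = ‖v''‖ = 1`. Rescaling by `t_j / A` instead puts `A • v` in the unique tangent cone,
where it violates `‖(A v)''‖ < A (1 + ‖(A v)'‖)^B = A`.
-/

open Filter Topology

theorem Submodule.projection_apply_eq_of_mem {R E : Type*} [Ring R] [AddCommGroup E] [Module R E]
    {p q : Submodule R E} (hpq : IsCompl p q) {x y : E} (hy : y ∈ p) (hxy : x - y ∈ q) :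
    p.projection q hpq x = y := by
  calc p.projection q hpq x = p.projection q hpq (y + (x - y)) := by rw [add_sub_cancel]
    _ = y := by
      rw [map_add, projection_apply_of_mem_left hpq hy, projection_apply_of_mem_right hpq hxy,
        add_zero]

theorem exists_continuousLinearMap_eq_of_isCompl {𝕜 E : Type*} [NontriviallyNormedField 𝕜]
    [CompleteSpace 𝕜] [NormedAddCommGroup E] [NormedSpace 𝕜 E] [FiniteDimensional 𝕜 E]
    {V₁ V₂ : Submodule 𝕜 E} (hcompl : IsCompl V₁ V₂) {π : E → E}
    (hπ : ∀ z, π z ∈ V₁ ∧ z - π z ∈ V₂) : ∃ P : E →L[𝕜] E, ∀ z, π z = P z :=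
  ⟨LinearMap.toContinuousLinearMap (V₁.projection V₂ hcompl), fun z =>
    (Submodule.projection_apply_eq_of_mem hcompl (hπ z).1 (hπ z).2).symm⟩

theorem le_one_add_rpow {x B : ℝ} (hx : 0 ≤ x) (hB : 1 ≤ B) : x ≤ (1 + x) ^ B :=
  (le_add_of_nonneg_left zero_le_one).trans (Real.self_le_rpow_of_one_le (by linarith) hB)

theorem exists_rescaled_limit_mem_ker_of_growth {E : Type*} [NormedAddCommGroup E]
    [NormedSpace ℝ E] [ProperSpace E] (P : E →L[ℝ] E) {B : ℝ} (hB : 1 ≤ B) {w : ℕ → E}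
    (hw : ∀ j : ℕ, ((j : ℝ) + 1) * (1 + ‖P (w j)‖) ^ B ≤ ‖w j - P (w j)‖) :
    ∃ (φ : ℕ → ℕ) (t : ℕ → ℝ) (v : E), (∀ j, 0 < t j) ∧ Tendsto t atTop atTop ∧
      Tendsto (fun j => (t j)⁻¹ • w (φ j)) atTop (𝓝 v) ∧ P v = 0 ∧ ‖v‖ = 1 := by
  set t : ℕ → ℝ := fun j => ‖w j - P (w j)‖
  have ht : ∀ j : ℕ, (j : ℝ) + 1 ≤ t j := fun j =>
    (le_mul_of_one_le_right (by positivity) (Real.one_le_rpow (by simp) (by linarith))).trans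
      (hw j)
  have ht0 : ∀ j, 0 < t j := fun j => by linarith [ht j]
  have hPw : ∀ j : ℕ, ((j : ℝ) + 1) * ‖P (w j)‖ ≤ t j := fun j =>
    (mul_le_mul_of_nonneg_left (le_one_add_rpow (norm_nonneg _) hB) (by positivity)).trans (hw j)
  set u : ℕ → E := fun j => (t j)⁻¹ • w j
  have hu_sub : ∀ j, ‖u j - P (u j)‖ = 1 := fun j => by
    rw [map_smul, ← smul_sub, norm_smul, Real.norm_of_nonneg (inv_nonneg.2 (ht0 j).le),
      inv_mul_cancel₀ (ht0 j).ne']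
  have hPu : ∀ j : ℕ, ‖P (u j)‖ ≤ ((j : ℝ) + 1)⁻¹ := fun j => by
    rw [map_smul, norm_smul, Real.norm_of_nonneg (inv_nonneg.2 (ht0 j).le), inv_mul_le_iff₀ (ht0 j),
      ← div_eq_mul_inv, le_div_iff₀ (by positivity), mul_comm]
    exact hPw j
  have hu_bdd : ∀ j, u j ∈ Metric.closedBall (0 : E) 2 := fun j => by
    rw [mem_closedBall_zero_iff]
    calc ‖u j‖ ≤ ‖u j - P (u j)‖ + ‖P (u j)‖ := norm_le_norm_sub_add _ _
      _ ≤ 1 + 1 := add_le_add (hu_sub j).le ((hPu j).trans (inv_le_one_of_one_le₀ (by simp)))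
      _ = 2 := one_add_one_eq_two
  obtain ⟨v, -, φ, hφ, hlim⟩ := (isCompact_closedBall (0 : E) 2).tendsto_subseq hu_bdd
  have hφ_top : Tendsto (fun j => (φ j : ℝ) + 1) atTop atTop :=
    tendsto_atTop_add_const_right _ 1 (tendsto_natCast_atTop_atTop.comp hφ.tendsto_atTop)
  have hPlim := (P.continuous.tendsto v).comp hlim
  have hPv : P v = 0 := tendsto_nhds_unique hPlim
    (squeeze_zero_norm (fun j => hPu (φ j)) (tendsto_inv_atTop_zero.comp hφ_top))
  have hv : ‖v - P v‖ = 1 :=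
    tendsto_nhds_unique (hlim.sub hPlim).norm (by simp only [Function.comp_def, hu_sub,
      tendsto_const_nhds])
  exact ⟨φ, t ∘ φ, v, fun j => ht0 (φ j), tendsto_atTop_mono (fun j => ht (φ j)) hφ_top, hlim,
    hPv, by simpa [hPv] using hv⟩

theorem smul_mem_tangentConeAtInftyWrt {n : ℕ} {V : Set (EuclideanSpace ℂ (Fin n))}
    {t : ℕ → ℝ} {v : EuclideanSpace ℂ (Fin n)} (hv : v ∈ tangentConeAtInftyWrt n V t) (c : ℝ) :
    c • v ∈ tangentConeAtInftyWrt n V (fun j => t j / c) := by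
  obtain ⟨x, hxV, hx⟩ := hv
  refine ⟨x, hxV, ?_⟩
  convert hx.const_smul c using 2 with j
  rw [smul_smul, inv_div, div_eq_mul_inv, mul_comm]

theorem statement1_general (n : ℕ)
    (V₁ V₂ : Submodule ℂ (EuclideanSpace ℂ (Fin n))) (hcompl : IsCompl V₁ V₂)
    (π : EuclideanSpace ℂ (Fin n) → EuclideanSpace ℂ (Fin n))
    (hπ : ∀ z, π z ∈ V₁ ∧ z - π z ∈ V₂)
    (V : Set (EuclideanSpace ℂ (Fin n)))
    (C : Set (EuclideanSpace ℂ (Fin n)))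
    (hC : ∀ t : ℕ → ℝ, (∀ j, 0 < t j) → Filter.Tendsto t Filter.atTop Filter.atTop →
        tangentConeAtInftyWrt n V t = C)
    (A B : ℝ) (hA : 0 < A) (hB : 1 ≤ B)
    (hcone : ∀ v ∈ C, ‖v - π v‖ < A * (1 + ‖π v‖) ^ B) :
    ∃ R : ℝ, 0 < R ∧ ∀ w ∈ V, ‖w - π w‖ < R * (1 + ‖π w‖) ^ B := by
  obtain ⟨P, hP⟩ := exists_continuousLinearMap_eq_of_isCompl hcompl hπ
  simp only [hP] at hcone ⊢
  by_contra! hcon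
  choose w hwV hw using fun j : ℕ => hcon ((j : ℝ) + 1) (by positivity)
  obtain ⟨φ, t, v, ht0, ht, hlim, hPv, hv⟩ :=
    exists_rescaled_limit_mem_ker_of_growth (P.restrictScalars ℝ) hB hw
  have hAv : A • v ∈ C := hC _ (fun j => div_pos (ht0 j) hA) (ht.atTop_div_const hA) ▸
    smul_mem_tangentConeAtInftyWrt ⟨w ∘ φ, fun j => hwV (φ j), hlim⟩ A
  replace hPv : P v = 0 := hPv
  simpa [hPv, norm_smul, hv, abs_of_pos hA] using hcone _ hAv

/-- Let `V₁, V₂` be complementary complex linear subspaces of `ℂⁿ`,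
with projection `π : z ↦ z'` onto `V₁` along `V₂` (so `z'' = z - π z`).  Let `V` be an
unbounded subset of `ℂⁿ` with a unique tangent cone at infinity `C`.  If `A > 0`,
`B ≥ 1` and every `v ∈ C` satisfies `‖v''‖ < A(1 + ‖v'‖)^B`, then there exists `R > 0`
such that every `w ∈ V` satisfies `‖w''‖ < R(1 + ‖w'‖)^B`. -/
theorem statement1 (n : ℕ) (hn : 2 ≤ n)
    (V₁ V₂ : Submodule ℂ (EuclideanSpace ℂ (Fin n))) (hcompl : IsCompl V₁ V₂)
    (π : EuclideanSpace ℂ (Fin n) → EuclideanSpace ℂ (Fin n))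
    (hπ : ∀ z, π z ∈ V₁ ∧ z - π z ∈ V₂)
    (V : Set (EuclideanSpace ℂ (Fin n))) (hV : ¬ Bornology.IsBounded V)
    (C : Set (EuclideanSpace ℂ (Fin n)))
    (hC : ∀ t : ℕ → ℝ, (∀ j, 0 < t j) → Filter.Tendsto t Filter.atTop Filter.atTop →
        tangentConeAtInftyWrt n V t = C)
    (A B : ℝ) (hA : 0 < A) (hB : 1 ≤ B)
    (hcone : ∀ v ∈ C, ‖v - π v‖ < A * (1 + ‖π v‖) ^ B) :
    ∃ R : ℝ, 0 < R ∧ ∀ w ∈ V, ‖w - π w‖ < R * (1 + ‖π w‖) ^ B :=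
  statement1_general n V₁ V₂ hcompl π hπ V C hC A B hA hB hcone
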